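/- Let F be a direct zero forcing set for a finite simple graph G, fix a complete forcing sequence from F, ending with all vertices filled, in which every resulting forcing chain has length 0 or 1, and let W be the set of vertices that perform a force in this sequence. Then V(G)∖W is a direct zero forcing set for G of size |F|. -/

import Mathlib

/-!  Common definitions: zero forcing (standard, loop, positive semidefinite),
zero-nonzero patterns, triangles, and related graph parameters. -/

variable {V : Type*}

/-- Standard zero forcing rule: with filled set `S`, the filled vertex `v` can force
its unique unfilled neighbor `u`. -/
def StdForce (G : SimpleGraph V) (S : Set V) (v u : V) : Prop :=
  v ∈ S ∧ u ∉ S ∧ G.Adj v u ∧ ∀ w, G.Adj v w → w ∉ S → w = u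

/-- Adjacency in the looping of `G` with loops at the vertices in `L`
(a vertex counts as its own neighbor iff it has a loop). -/
def LoopAdj (G : SimpleGraph V) (L : Set V) (v w : V) : Prop :=
  G.Adj v w ∨ (v = w ∧ v ∈ L)

/-- Loop zero forcing rule (the forcing vertex need not be filled): `v` can force `u`
if `u` is the only unfilled neighbor of `v` in the looping. -/
def LoopForce (G : SimpleGraph V) (L : Set V) (S : Set V) (v u : V) : Prop :=
  u ∉ S ∧ LoopAdj G L v u ∧ ∀ w, LoopAdj G L v w → w ∉ S → w = u

/-- Positive semidefinite zero forcing rule: the filled vertex `v` can force the unfilled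
vertex `u` if `u` is the only neighbor of `v` in the connected component of `u` of the
subgraph induced by the unfilled vertices. -/
def PsdForce (G : SimpleGraph V) (S : Set V) (v u : V) : Prop :=
  v ∈ S ∧ u ∉ S ∧ G.Adj v u ∧
    ∀ w, G.Adj v w → w ∉ S →
      Relation.ReflTransGen (fun a b => G.Adj a b ∧ a ∉ S ∧ b ∉ S) u w → w = u

/-- The vertices performing a force in a forcing sequence. -/
def sourcesOf (seq : List (V × V)) : Set V := {v | ∃ p ∈ seq, p.1 = v}

/-- The vertices that get forced in a forcing sequence. -/
def targetsOf (seq : List (V × V)) : Set V := {u | ∃ p ∈ seq, p.2 = u}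

/-- The filled set after performing all forces of `seq` starting from `F`. -/
def filledAfter (F : Set V) (seq : List (V × V)) : Set V := F ∪ targetsOf seq

/-- `ValidSeq rule seq F`: starting with `F` as the filled set, the sequence of forces
`seq` is permitted (each force in turn is allowed by `rule`, and each vertex forces
at most once). -/
def ValidSeq (rule : Set V → V → V → Prop) : List (V × V) → Set V → Prop
  | [], _ => True
  | (v, u) :: rest, F => rule F v u ∧ (∀ p ∈ rest, p.1 ≠ v) ∧ ValidSeq rule rest (insert u F)

/-- `F` is a zero forcing set w.r.t. the forcing rule `rule`. -/
def IsZFSet (rule : Set V → V → V → Prop) (F : Set V) : Prop :=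
  ∃ seq : List (V × V), ValidSeq rule seq F ∧ filledAfter F seq = Set.univ

/-- `F` is a zero forcing set (w.r.t. `rule`) from which `R` can be the set of vertices
that force: some (automatically complete) forcing sequence from `F` fills every vertex
and the set of vertices performing a force is exactly `R`. -/
def ForcesWith (rule : Set V → V → V → Prop) (F R : Set V) : Prop :=
  ∃ seq : List (V × V), ValidSeq rule seq F ∧ filledAfter F seq = Set.univ ∧
    sourcesOf seq = R

/-- The zero forcing number w.r.t. a forcing rule. -/
noncomputable def Znum (rule : Set V → V → V → Prop) : ℕ :=
  sInf {n | ∃ F : Set V, IsZFSet rule F ∧ F.ncard = n}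

/-- The (standard) zero forcing number `Z(G)`. -/
noncomputable def Z (G : SimpleGraph V) : ℕ := Znum (StdForce G)

/-- The zero forcing number of the looping of `G` with loops at `L`. -/
noncomputable def Zloop (G : SimpleGraph V) (L : Set V) : ℕ := Znum (LoopForce G L)

/-- The positive semidefinite zero forcing number `Z₊(G)`. -/
noncomputable def Zplus (G : SimpleGraph V) : ℕ := Znum (PsdForce G)

/-- The enhanced zero forcing number `Ẑ(G)`: the maximum over all loopings of `G` of the
zero forcing number of the looping. -/
noncomputable def Zhat (G : SimpleGraph V) : ℕ := sSup {n | ∃ L : Set V, Zloop G L = n}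

/-- `F` is a direct zero forcing set for `G`: some forcing sequence from `F` fills every
vertex and every vertex that performs a force belongs to `F`. -/
def IsDirectZFSet (G : SimpleGraph V) (F : Set V) : Prop :=
  ∃ seq : List (V × V), ValidSeq (StdForce G) seq F ∧ filledAfter F seq = Set.univ ∧
    sourcesOf seq ⊆ F

/-- The direct zero forcing number `Z_d(G)`. -/
noncomputable def Zd (G : SimpleGraph V) : ℕ :=
  sInf {n | ∃ F : Set V, IsDirectZFSet G F ∧ F.ncard = n}

/-- A zero-nonzero pattern `Y` (entry `Y i j` means the `(i,j)` entry is `*`)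
has a `k × k` submatrix that is a triangle. -/
def HasTriOfSize {ρ γ : Type*} (Y : ρ → γ → Prop) (k : ℕ) : Prop :=
  ∃ (r : Fin k → ρ) (c : Fin k → γ), Function.Injective r ∧ Function.Injective c ∧
    (∀ i, Y (r i) (c i)) ∧ ∀ i j : Fin k, i < j → ¬ Y (r i) (c j)

/-- The triangle number `tri(Y)` of a zero-nonzero pattern. -/
noncomputable def tri {ρ γ : Type*} (Y : ρ → γ → Prop) : ℕ := sSup {k | HasTriOfSize Y k}

/-- Membership in `S_znz(G)`: off the diagonal, the pattern matches the adjacency of `G`. -/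
def InSznz (G : SimpleGraph V) (A : V → V → Prop) : Prop :=
  ∀ i j : V, i ≠ j → (A i j ↔ G.Adj i j)

/-- The zero-nonzero pattern of the looping of `G` with loops at `L`. -/
def loopPattern (G : SimpleGraph V) (L : Set V) : V → V → Prop :=
  fun i j => (i = j ∧ i ∈ L) ∨ (i ≠ j ∧ G.Adj i j)

/-- The submatrix of the pattern `Y` with rows `R` and columns `C` is a triangle:
there are enumerations of `R` and `C` realizing a lower-triangular pattern with `*`
diagonal (in particular `|R| = |C|`). -/
def SubIsTriangle {ρ γ : Type*} (Y : ρ → γ → Prop) (R : Finset ρ) (C : Finset γ) : Prop :=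
  ∃ (k : ℕ) (r : Fin k → ρ) (c : Fin k → γ),
    Function.Injective r ∧ Function.Injective c ∧
    (∀ x : ρ, x ∈ R ↔ ∃ i, r i = x) ∧ (∀ y : γ, y ∈ C ↔ ∃ i, c i = y) ∧
    (∀ i, Y (r i) (c i)) ∧ ∀ i j : Fin k, i < j → ¬ Y (r i) (c j)

/-- `(R, C)` is a persistent triangle of `G`. -/
def PersistentTriangle (G : SimpleGraph V) (R C : Finset V) : Prop :=
  ∀ A : V → V → Prop, InSznz G A → SubIsTriangle A R C

/-- `F` is a direct zero forcing set for `G` from which `R` can be the set of vertices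
that force. -/
def DirectForcesWith (G : SimpleGraph V) (F R : Set V) : Prop :=
  ∃ seq : List (V × V), ValidSeq (StdForce G) seq F ∧ filledAfter F seq = Set.univ ∧
    sourcesOf seq = R ∧ R ⊆ F

/-- `(range r, range c)` is a partition of `G` according to the `m × n` pattern `Y`,
with labelings given by `r` and `c`. -/
def PartitionAccording (G : SimpleGraph V) {m n : ℕ} (Y : Fin m → Fin n → Prop)
    (r : Fin m → V) (c : Fin n → V) : Prop :=
  Function.Injective r ∧ Function.Injective c ∧ (∀ i j, r i ≠ c j) ∧
    (∀ v : V, (∃ i, r i = v) ∨ (∃ j, c j = v)) ∧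
    ∀ i j, G.Adj (r i) (c j) ↔ Y i j

/-- `F` is a zero forcing set for `G` that forces from `V1` to `V2`. -/
def ForcesFromTo (G : SimpleGraph V) (F V1 V2 : Set V) : Prop :=
  V1 ⊆ F ∧ ∃ seq : List (V × V), ValidSeq (StdForce G) seq F ∧
    filledAfter F seq = Set.univ ∧ sourcesOf seq ⊆ V1 ∧ targetsOf seq ⊆ V2

/-- `(V1, V2)` is a partition of the vertex set of `G` into two cliques. -/
def IsCliquePartition (G : SimpleGraph V) (V1 V2 : Set V) : Prop :=
  Disjoint V1 V2 ∧ V1 ∪ V2 = Set.univ ∧ G.IsClique V1 ∧ G.IsClique V2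

/-- `G` is cobipartite. -/
def Cobipartite (G : SimpleGraph V) : Prop := ∃ V1 V2 : Set V, IsCliquePartition G V1 V2

/-- `G` is the cobipartite graph associated with the pattern `Y`, via labelings `r`, `c`. -/
def CobipAssociated (G : SimpleGraph V) {m n : ℕ} (Y : Fin m → Fin n → Prop)
    (r : Fin m → V) (c : Fin n → V) : Prop :=
  PartitionAccording G Y r c ∧ G.IsClique (Set.range r) ∧ G.IsClique (Set.range c)

/-- `z` is a critical vertex: some optimal forcing sequence neither lets `z` force
nor forces `z`. -/
def Critical (G : SimpleGraph V) (z : V) : Prop :=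
  ∃ (F : Set V) (seq : List (V × V)), F.ncard = Z G ∧ ValidSeq (StdForce G) seq F ∧
    filledAfter F seq = Set.univ ∧ z ∉ sourcesOf seq ∧ z ∉ targetsOf seq

/-- `z` is an uncritical vertex: in every optimal forcing sequence, exactly one of the
following holds: `z` performs a force, or `z` gets forced. -/
def Uncritical (G : SimpleGraph V) (z : V) : Prop :=
  ∀ (F : Set V) (seq : List (V × V)), F.ncard = Z G → ValidSeq (StdForce G) seq F →
    filledAfter F seq = Set.univ → (z ∈ sourcesOf seq ↔ z ∉ targetsOf seq)

/-- The maximum nullity `M(G)` over the field `𝔽`. -/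
noncomputable def Mnum (𝔽 : Type*) [Field 𝔽] [Fintype V] [DecidableEq V]
    (G : SimpleGraph V) : ℕ :=
  sSup {k | ∃ A : Matrix V V 𝔽, A.IsSymm ∧ (∀ i j : V, i ≠ j → (A i j ≠ 0 ↔ G.Adj i j)) ∧
    k = Fintype.card V - A.rank}

/-- The minimum rank `mr_𝔽(Y)` of a zero-nonzero pattern over the field `𝔽`. -/
noncomputable def mr (𝔽 : Type*) [Field 𝔽] {m n : ℕ} (Y : Fin m → Fin n → Prop) : ℕ :=
  sInf {k | ∃ A : Matrix (Fin m) (Fin n) 𝔽, (∀ i j, A i j ≠ 0 ↔ Y i j) ∧ A.rank = k}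

/-- `G` is a `k`-tree: there is a construction ordering of the vertices in which the
first `k+1` vertices form a clique and every later vertex is adjacent among the earlier
vertices to exactly a `k`-clique. -/
def IsKTree (k : ℕ) [Fintype V] (G : SimpleGraph V) : Prop :=
  k + 1 ≤ Fintype.card V ∧ ∃ ord : V ≃ Fin (Fintype.card V),
    (∀ u v : V, (ord u : ℕ) < k + 1 → (ord v : ℕ) < k + 1 → u ≠ v → G.Adj u v) ∧
    ∀ v : V, k + 1 ≤ (ord v : ℕ) →
      G.IsClique {u : V | (ord u : ℕ) < (ord v : ℕ) ∧ G.Adj u v} ∧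
      {u : V | (ord u : ℕ) < (ord v : ℕ) ∧ G.Adj u v}.ncard = k


/-! Reverse the forcing sequence, turning each force `v → u` into `u → v`, and start from
the complement of the set of forcing vertices. When `u` is to force `v` in the reversed
sequence, its unfilled neighbors are among `v` and the vertices that forced before `v → u`
in the original sequence; none of the latter is adjacent to `u`, since each of them forced
while `u` was still unfilled and did not force `u`. As no vertex both forces and is forced,
the forcing vertices of the reversal lie in the starting set. For the size: the original
starting set is the complement of the forced vertices, and a forcing sequence has as many
distinct forced vertices as distinct forcing vertices. -/

lemma Set.ncard_compl_eq_of_ncard_eq {α : Type*} {s t : Set α} (hs : s.Finite)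
    (ht : t.Finite) (h : s.ncard = t.ncard) : sᶜ.ncard = tᶜ.ncard := by
  cases finite_or_infinite α
  · rw [Set.ncard_compl s, Set.ncard_compl t, h]
  · rw [hs.infinite_compl.ncard, ht.infinite_compl.ncard]

@[simp]
lemma mem_sourcesOf {l : List (V × V)} {x : V} : x ∈ sourcesOf l ↔ ∃ p ∈ l, p.1 = x :=
  Iff.rfl

@[simp]
lemma mem_targetsOf {l : List (V × V)} {x : V} : x ∈ targetsOf l ↔ ∃ p ∈ l, p.2 = x :=
  Iff.rfl

lemma sourcesOf_eq_coe_toFinset [DecidableEq V] (l : List (V × V)) :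
    sourcesOf l = ↑(l.map Prod.fst).toFinset := by
  ext; simp

lemma targetsOf_eq_coe_toFinset [DecidableEq V] (l : List (V × V)) :
    targetsOf l = ↑(l.map Prod.snd).toFinset := by
  ext; simp

lemma sourcesOf_cons (p : V × V) (l : List (V × V)) :
    sourcesOf (p :: l) = insert p.1 (sourcesOf l) := by
  ext; simp [eq_comm]

lemma targetsOf_cons (p : V × V) (l : List (V × V)) :
    targetsOf (p :: l) = insert p.2 (targetsOf l) := by
  ext; simp [eq_comm]

lemma finite_sourcesOf (l : List (V × V)) : (sourcesOf l).Finite := by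
  classical
  rw [sourcesOf_eq_coe_toFinset]
  exact Finset.finite_toSet _

lemma finite_targetsOf (l : List (V × V)) : (targetsOf l).Finite := by
  classical
  rw [targetsOf_eq_coe_toFinset]
  exact Finset.finite_toSet _

lemma filledAfter_cons (S : Set V) (v u : V) (l : List (V × V)) :
    filledAfter S ((v, u) :: l) = filledAfter (insert u S) l := by
  rw [filledAfter, filledAfter, targetsOf_cons, Set.union_insert, Set.insert_union]

def reversal (l : List (V × V)) : List (V × V) := (l.map Prod.swap).reverse

@[simp]
lemma reversal_append_singleton (l : List (V × V)) (p : V × V) :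
    reversal (l ++ [p]) = p.swap :: reversal l := by
  simp [reversal]

@[simp]
lemma sourcesOf_reversal (l : List (V × V)) : sourcesOf (reversal l) = targetsOf l := by
  ext; simp [reversal]

@[simp]
lemma targetsOf_reversal (l : List (V × V)) : targetsOf (reversal l) = sourcesOf l := by
  ext; simp [reversal]

lemma validSeq_append_singleton (rule : Set V → V → V → Prop) (l : List (V × V)) (v u : V)
    (S : Set V) :
    ValidSeq rule (l ++ [(v, u)]) S ↔
      ValidSeq rule l S ∧ v ∉ sourcesOf l ∧ rule (filledAfter S l) v u := by
  induction l generalizing S with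
  | nil => simp [ValidSeq, filledAfter, targetsOf]
  | cons p t ih =>
    obtain ⟨a, b⟩ := p
    simp only [List.cons_append, ValidSeq, ih, filledAfter_cons, List.forall_mem_append,
      List.forall_mem_singleton, sourcesOf_cons, Set.mem_insert_iff, not_or]
    grind

namespace ValidSeq

lemma nodup_map_fst {rule : Set V → V → V → Prop} {l : List (V × V)} {S : Set V}
    (h : ValidSeq rule l S) : (l.map Prod.fst).Nodup := by
  induction l generalizing S with
  | nil => exact List.nodup_nil
  | cons p t ih =>
    obtain ⟨v, u⟩ := p
    refine List.nodup_cons.mpr ⟨?_, ih h.2.2⟩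
    simp only [List.mem_map, not_exists, not_and]
    exact fun q hq => h.2.1 q hq

variable {G : SimpleGraph V}

lemma snd_notMem {l : List (V × V)} {S : Set V} (h : ValidSeq (StdForce G) l S) {p : V × V}
    (hp : p ∈ l) : p.2 ∉ S := by
  induction l generalizing S with
  | nil => simp at hp
  | cons q t ih =>
    obtain ⟨v, u⟩ := q
    rcases List.mem_cons.mp hp with rfl | hp
    · exact h.1.2.1
    · exact fun hS => ih h.2.2 hp (Set.mem_insert_of_mem u hS)

lemma nodup_map_snd {l : List (V × V)} {S : Set V} (h : ValidSeq (StdForce G) l S) :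
    (l.map Prod.snd).Nodup := by
  induction l generalizing S with
  | nil => exact List.nodup_nil
  | cons p t ih =>
    obtain ⟨v, u⟩ := p
    refine List.nodup_cons.mpr ⟨?_, ih h.2.2⟩
    simp only [List.mem_map, not_exists, not_and]
    rintro q hq rfl
    exact h.2.2.snd_notMem hq (Set.mem_insert _ S)

lemma adj_fst_mem_filledAfter {l : List (V × V)} {S : Set V} (h : ValidSeq (StdForce G) l S)
    {p : V × V} (hp : p ∈ l) {x : V} (hx : G.Adj p.1 x) : x ∈ filledAfter S l := by
  induction l generalizing S with
  | nil => simp at hp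
  | cons q t ih =>
    obtain ⟨v, u⟩ := q
    rw [filledAfter_cons]
    rcases List.mem_cons.mp hp with rfl | hp
    · by_cases hxS : x ∈ S
      · exact Or.inl (Set.mem_insert_of_mem u hxS)
      · rw [h.1.2.2.2 x hx hxS]
        exact Or.inl (Set.mem_insert u S)
    · exact ih h.2.2 hp

lemma eq_compl_targetsOf {l : List (V × V)} {S : Set V} (h : ValidSeq (StdForce G) l S)
    (hfill : filledAfter S l = Set.univ) : S = (targetsOf l)ᶜ := by
  ext x
  refine ⟨?_, fun hx => ?_⟩
  · rintro hxS ⟨p, hp, rfl⟩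
    exact h.snd_notMem hp hxS
  · have hx_filled : x ∈ filledAfter S l := hfill ▸ Set.mem_univ x
    exact hx_filled.resolve_right hx

lemma ncard_sourcesOf {rule : Set V → V → V → Prop} {l : List (V × V)} {S : Set V}
    (h : ValidSeq rule l S) : (sourcesOf l).ncard = l.length := by
  classical
  rw [sourcesOf_eq_coe_toFinset, Set.ncard_coe_finset, List.toFinset_card_of_nodup
    h.nodup_map_fst, List.length_map]

lemma ncard_targetsOf {l : List (V × V)} {S : Set V} (h : ValidSeq (StdForce G) l S) :
    (targetsOf l).ncard = l.length := by
  classical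
  rw [targetsOf_eq_coe_toFinset, Set.ncard_coe_finset, List.toFinset_card_of_nodup
    h.nodup_map_snd, List.length_map]

end ValidSeq

lemma validSeq_reversal {G : SimpleGraph V} {S : Set V} {l : List (V × V)}
    (h : ValidSeq (StdForce G) l S) (hchain : Disjoint (sourcesOf l) (targetsOf l)) :
    ValidSeq (StdForce G) (reversal l) (sourcesOf l)ᶜ := by
  induction l using List.reverseRecOn with
  | nil => trivial
  | append_singleton t p ih =>
    obtain ⟨v, u⟩ := p
    obtain ⟨ht, hvt, hforce⟩ := (validSeq_append_singleton _ t v u S).mp h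
    have hsrc : sourcesOf (t ++ [(v, u)]) = insert v (sourcesOf t) := by
      ext; simp [or_comm, eq_comm]
    have hu : u ∉ filledAfter S t := hforce.2.1
    have hu_src : u ∉ sourcesOf (t ++ [(v, u)]) :=
      Set.disjoint_right.mp hchain ⟨(v, u), by simp, rfl⟩
    rw [reversal_append_singleton]
    refine ⟨⟨hu_src, by simp [hsrc], hforce.2.2.1.symm, fun w hw hwX => ?_⟩, ?_, ?_⟩
    · rw [hsrc, Set.notMem_compl_iff] at hwX
      rcases hwX with rfl | ⟨q, hq, rfl⟩
      · rfl
      · exact absurd (ht.adj_fst_mem_filledAfter hq hw.symm) hu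
    · rintro q hq rfl
      have hq_tgt : q.1 ∈ targetsOf t := by rw [← sourcesOf_reversal]; exact ⟨q, hq, rfl⟩
      exact hu (Or.inr hq_tgt)
    · have hins : insert v (sourcesOf (t ++ [(v, u)]))ᶜ = (sourcesOf t)ᶜ := by
        ext x
        rcases eq_or_ne x v with rfl | hxv
        · simp [hsrc, hvt]
        · simp [hsrc, hxv]
      rw [hins]
      refine ih ht (hchain.mono ?_ ?_)
      · rw [hsrc]; exact Set.subset_insert v _
      · rintro x ⟨q, hq, rfl⟩
        exact ⟨q, by simp [hq], rfl⟩

lemma isDirectZFSet_compl_sourcesOf {G : SimpleGraph V} {S : Set V} {l : List (V × V)}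
    (h : ValidSeq (StdForce G) l S) (hchain : Disjoint (sourcesOf l) (targetsOf l)) :
    IsDirectZFSet G (sourcesOf l)ᶜ := by
  refine ⟨reversal l, validSeq_reversal h hchain, ?_, ?_⟩
  · rw [filledAfter, targetsOf_reversal, Set.compl_union_self]
  · rw [sourcesOf_reversal]
    exact hchain.symm.subset_compl_right

theorem reversal_of_direct_ZF_set_general
    {V : Type*} (G : SimpleGraph V) (F : Set V)
    (seq : List (V × V)) (hval : ValidSeq (StdForce G) seq F)
    (hfill : filledAfter F seq = Set.univ)
    (hchain : Disjoint (sourcesOf seq) (targetsOf seq)) :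
    IsDirectZFSet G (Set.univ \ sourcesOf seq) ∧
      (Set.univ \ sourcesOf seq).ncard = F.ncard := by
  rw [← Set.compl_eq_univ_sdiff, hval.eq_compl_targetsOf hfill]
  refine ⟨isDirectZFSet_compl_sourcesOf hval hchain, ?_⟩
  exact Set.ncard_compl_eq_of_ncard_eq (finite_sourcesOf seq) (finite_targetsOf seq)
    (hval.ncard_sourcesOf.trans hval.ncard_targetsOf.symm)

/-- If `F` is a direct zero forcing set for `G` and `seq` is a complete
forcing sequence from `F` filling every vertex in which every forcing chain has length
`0` or `1` (equivalently, no vertex both forces and gets forced), and `W` is the set of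
vertices that perform a force in `seq`, then `V(G) \\ W` is a direct zero forcing set
for `G` of size `|F|`. -/
theorem reversal_of_direct_ZF_set
    {V : Type*} [Fintype V] [DecidableEq V] (G : SimpleGraph V) (F : Set V)
    (hF : IsDirectZFSet G F)
    (seq : List (V × V)) (hval : ValidSeq (StdForce G) seq F)
    (hfill : filledAfter F seq = Set.univ)
    (hchain : Disjoint (sourcesOf seq) (targetsOf seq)) :
    IsDirectZFSet G (Set.univ \ sourcesOf seq) ∧
      (Set.univ \ sourcesOf seq).ncard = F.ncard :=
  reversal_of_direct_ZF_set_general G F seq hval hfill hchain
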